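/- Let P(X) = p_d X^d + p_{d-1}X^{d-1} + ⋯ + p_1 X + p_0 ∈ ℤ[X] with p_0 ≥ 2 and p_d ≠ 0, let 𝓡 = ℤ[X]/P(X)ℤ[X] with x the image of X, and set r = (p_d/p_0, p_{d-1}/p_0, …, p_1/p_0) ∈ ℝ^d. Then every element B of 𝓡 admits a representation B = b_0 + b_1 x + ⋯ + b_ℓ x^ℓ with all digits b_i ∈ {0,1,…,p_0−1} (i.e., P is a CNS polynomial with digit set {0,…,p_0−1}) if and only if r ∈ D_d^{(0)}, i.e., for every z ∈ ℤ^d there exists k ∈ ℕ with τ_r^k(z) = 0. -/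

import Mathlib

open Polynomial

/-- The shift radix system `τ_r : ℤ^d → ℤ^d`. -/
noncomputable def srsMap (d : ℕ) (r : Fin d → ℝ) (z : Fin d → ℤ) : Fin d → ℤ :=
  fun i =>
    if h : (i : ℕ) + 1 < d then z ⟨(i : ℕ) + 1, h⟩
    else -⌊∑ j, r j * (z j : ℝ)⌋

/-- The polynomial `P(X) = p_d X^d + ⋯ + p_1 X + p_0`. -/
noncomputable def cnsPoly (d : ℕ) (p : Fin (d + 1) → ℤ) : Polynomial ℤ :=
  ∑ j : Fin (d + 1), C (p j) * X ^ (j : ℕ)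

/-- The ring `𝓡 = ℤ[X]/P(X)ℤ[X]`. -/
abbrev CnsRing (d : ℕ) (p : Fin (d + 1) → ℤ) :=
  Polynomial ℤ ⧸ Ideal.span {cnsPoly d p}

/-- The image `x` of `X` in `𝓡`. -/
noncomputable def cnsX (d : ℕ) (p : Fin (d + 1) → ℤ) : CnsRing d p :=
  Ideal.Quotient.mk _ X

/-!
The map `Λ(z) = ∑ⱼ zⱼ · (P div X^(d-j))` from `ℤ^d` to `𝓡` is injective (its matrix is
triangular with diagonal `p_d`) and conjugates `τ_r` to digit stripping:
`Λ(z) = a + x · Λ(τ_r z)`, where `a ∈ {0, …, p₀-1}` is the constant coefficient of `Λ(z)`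
reduced mod `p₀`. Digits are unique, because `x` is a non-zero-divisor and `𝓡 / x𝓡 ≅ ℤ / p₀`.
Hence an expansion of `Λ(z)` with `ℓ + 1` digits forces `τ_r^(ℓ+1) z = 0`. Conversely, if all
orbits reach `0`, every `Λ(z)` has an expansion; since `c + x B + Λ(z) = a + x (B + Λ(z'))`,
Horner's scheme then gives one for every `B = B + Λ(0)`.
-/

namespace Polynomial

variable {R : Type*} [Ring R]

theorem coeff_iterate_divX (P : R[X]) (m i : ℕ) : (divX^[m] P).coeff i = P.coeff (i + m) := by
  induction m generalizing i with
  | zero => rfl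
  | succ m ih => rw [Function.iterate_succ_apply', coeff_divX, ih, add_right_comm, add_assoc]

theorem X_mul_iterate_divX_succ (P : R[X]) (m : ℕ) :
    X * divX^[m + 1] P = divX^[m] P - C (P.coeff m) := by
  have h := X_mul_divX_add (divX^[m] P)
  rw [coeff_iterate_divX, zero_add] at h
  rw [Function.iterate_succ_apply', eq_sub_iff_add_eq, h]

theorem iterate_divX_of_natDegree_le {P : R[X]} {d : ℕ} (hP : P.natDegree ≤ d) :
    divX^[d] P = C (P.coeff d) := by
  ext i
  rw [coeff_iterate_divX, coeff_C]
  split_ifs with hi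
  · rw [hi, zero_add]
  · exact coeff_eq_zero_of_natDegree_lt (by omega)

end Polynomial

/-- A polynomial representative of `Λ(z)`. -/
noncomputable def srsPoly (P : ℤ[X]) {d : ℕ} (z : Fin d → ℤ) : ℤ[X] :=
  ∑ j, C (z j) * divX^[d - j] P

/-- `τ_r` in exact integer arithmetic: for `r = (p_d/p₀, …, p₁/p₀)` one has
`∑ⱼ rⱼ zⱼ = (srsPoly P z).coeff 0 / p₀`. -/
noncomputable def srsStep (P : ℤ[X]) {n : ℕ} (z : Fin (n + 1) → ℤ) : Fin (n + 1) → ℤ :=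
  Fin.snoc (Fin.tail z) (-((srsPoly P z).coeff 0 / P.coeff 0))

section SrsPoly

variable {P : ℤ[X]} {d : ℕ}

@[simp]
theorem srsPoly_zero : srsPoly P (0 : Fin d → ℤ) = 0 := by
  simp [srsPoly]

theorem coeff_srsPoly (z : Fin d → ℤ) (i : ℕ) :
    (srsPoly P z).coeff i = ∑ j, z j * P.coeff (i + (d - j)) := by
  simp only [srsPoly, finsetSum_coeff, coeff_C_mul, coeff_iterate_divX]

theorem natDegree_srsPoly_lt (hP : P.natDegree ≤ d) (hd : 0 < d) (z : Fin d → ℤ) :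
    (srsPoly P z).natDegree < d := by
  refine (natDegree_le_iff_coeff_eq_zero.mpr fun i hi => ?_).trans_lt (Nat.sub_lt hd one_pos)
  rw [coeff_srsPoly]
  refine Finset.sum_eq_zero fun j _ => ?_
  rw [coeff_eq_zero_of_natDegree_lt (by omega), mul_zero]

theorem eq_zero_of_srsPoly_eq_zero (hP : P.natDegree ≤ d) (hlead : P.coeff d ≠ 0)
    {z : Fin d → ℤ} (hz : srsPoly P z = 0) : z = 0 := by
  by_contra hne
  obtain ⟨j₀, hj₀, hmax⟩ := Finset.exists_max_image (Finset.univ.filter (z · ≠ 0)) (fun j => j)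
    (by simpa [Finset.filter_nonempty_iff, funext_iff] using hne)
  rw [Finset.mem_filter] at hj₀
  have hcoeff := congrArg (coeff · j₀) hz
  simp only [coeff_srsPoly, coeff_zero] at hcoeff
  rw [Finset.sum_eq_single j₀, Nat.add_sub_cancel' j₀.is_lt.le] at hcoeff
  · exact mul_ne_zero hj₀.2 hlead hcoeff
  · intro j _ hj
    rcases lt_or_gt_of_ne hj with h | h
    · rw [coeff_eq_zero_of_natDegree_lt (by omega), mul_zero]
    · have hzj : z j = 0 := by
        by_contra hzj
        exact (hmax j (by simpa using hzj)).not_gt h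
      rw [hzj, zero_mul]
  · simp

theorem X_mul_srsPoly_snoc_tail {n : ℕ} (hP : P.natDegree ≤ n + 1) (z : Fin (n + 1) → ℤ)
    (q : ℤ) :
    X * srsPoly P (Fin.snoc (Fin.tail z) q : Fin (n + 1) → ℤ)
      = srsPoly P z - C ((srsPoly P z).coeff 0) + C q * (P - C (P.coeff 0)) := by
  have hshift (j : Fin n) : X * divX^[n + 1 - j.castSucc] P
      = divX^[n + 1 - j.succ] P - C (P.coeff (n + 1 - j.succ)) := by
    rw [Fin.val_castSucc, Fin.val_succ, show n + 1 - j = n - j + 1 by omega,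
      X_mul_iterate_divX_succ, Nat.add_sub_add_right]
  have hlast : X * divX^[n + 1 - Fin.last n] P = P - C (P.coeff 0) := by
    rw [Fin.val_last, show n + 1 - n = 0 + 1 by omega, X_mul_iterate_divX_succ]
    rfl
  have hfirst :
      divX^[n + 1 - (0 : Fin (n + 1))] P - C (P.coeff (n + 1 - (0 : Fin (n + 1)))) = 0 := by
    rw [Fin.val_zero, Nat.sub_zero, iterate_divX_of_natDegree_le hP, sub_self]
  have hz : srsPoly P z - C ((srsPoly P z).coeff 0)
      = ∑ j, C (z j) * (divX^[n + 1 - j] P - C (P.coeff (n + 1 - j))) := by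
    rw [coeff_srsPoly, srsPoly]
    simp only [zero_add, map_sum, C_mul, mul_sub, Finset.sum_sub_distrib]
  rw [hz, Fin.sum_univ_succ, hfirst, mul_zero, zero_add, srsPoly, Fin.sum_univ_castSucc,
    mul_add, Finset.mul_sum]
  simp only [Fin.snoc_castSucc, Fin.snoc_last, Fin.tail, mul_left_comm X, hshift, hlast]

end SrsPoly

section DigitExpansion

variable {R : Type*} [CommRing R]

def HasDigitExpansion (x : R) (N : ℤ) (B : R) : Prop :=
  ∃ (ℓ : ℕ) (b : ℕ → ℤ), (∀ i ≤ ℓ, 0 ≤ b i ∧ b i < N) ∧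
    B = ∑ i ∈ Finset.range (ℓ + 1), (b i : R) * x ^ i

theorem sum_range_succ_mul_pow (x : R) (b : ℕ → R) (n : ℕ) :
    ∑ i ∈ Finset.range (n + 1), b i * x ^ i
      = b 0 + x * ∑ i ∈ Finset.range n, b (i + 1) * x ^ i := by
  rw [Finset.sum_range_succ', Finset.mul_sum, add_comm]
  simp only [pow_succ, pow_zero, mul_one, mul_left_comm x, mul_comm _ x]

theorem HasDigitExpansion.zero {x : R} {N : ℤ} (hN : 0 < N) : HasDigitExpansion x N 0 :=
  ⟨0, fun _ => 0, fun _ _ => ⟨le_rfl, hN⟩, by simp⟩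

theorem HasDigitExpansion.intCast_add_mul {x B : R} {N e : ℤ} (he : 0 ≤ e ∧ e < N)
    (hB : HasDigitExpansion x N B) : HasDigitExpansion x N (e + x * B) := by
  obtain ⟨ℓ, b, hb, rfl⟩ := hB
  refine ⟨ℓ + 1, fun i => if i = 0 then e else b (i - 1), fun i hi => ?_, ?_⟩
  · dsimp only
    split_ifs
    · exact he
    · exact hb (i - 1) (by omega)
  · rw [sum_range_succ_mul_pow x (fun i => ((if i = 0 then e else b (i - 1) : ℤ) : R))]
    simp

end DigitExpansion

namespace AdjoinRoot

variable {P : ℤ[X]}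

theorem root_mul_left_cancel (hP : P.coeff 0 ≠ 0) {A B : AdjoinRoot P}
    (h : root P * A = root P * B) : A = B := by
  induction A using AdjoinRoot.induction_on with | ih f =>
  induction B using AdjoinRoot.induction_on with | ih g =>
  rw [← mk_X, ← map_mul, ← map_mul, mk_eq_mk, ← mul_sub] at h
  have hXP : IsRelPrime P X :=
    ((irreducible_X.isRelPrime_iff_not_dvd).mpr (mt X_dvd_iff.mp hP)).symm
  exact mk_eq_mk.mpr (hXP.dvd_of_dvd_mul_left h)

theorem coeff_zero_dvd_of_intCast_eq_root_mul {c : ℤ} {A : AdjoinRoot P}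
    (h : (c : AdjoinRoot P) = root P * A) : P.coeff 0 ∣ c := by
  induction A using AdjoinRoot.induction_on with | ih g =>
  obtain ⟨k, hk⟩ : P ∣ C c - X * g := by
    rw [← mk_eq_zero, map_sub, map_mul, mk_X, mk_C, sub_eq_zero]
    exact_mod_cast h
  have hk0 := congrArg (coeff · 0) hk
  simp only [coeff_sub, coeff_C_zero, mul_coeff_zero, coeff_X_zero, zero_mul, sub_zero] at hk0
  exact ⟨k.coeff 0, hk0⟩

theorem intCast_add_root_mul_inj (hP : 0 < P.coeff 0) {e e' : ℤ} {A A' : AdjoinRoot P}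
    (he : 0 ≤ e ∧ e < P.coeff 0) (he' : 0 ≤ e' ∧ e' < P.coeff 0)
    (h : (e : AdjoinRoot P) + root P * A = e' + root P * A') : e = e' ∧ A = A' := by
  have hdvd : P.coeff 0 ∣ e' - e := coeff_zero_dvd_of_intCast_eq_root_mul (A := A - A') <| by
    push_cast
    linear_combination -h
  have hee' : e = e' := by
    have hmod := Int.modEq_iff_dvd.mpr hdvd
    rwa [Int.ModEq, Int.emod_eq_of_lt he.1 he.2, Int.emod_eq_of_lt he'.1 he'.2] at hmod
  subst hee'
  exact ⟨rfl, root_mul_left_cancel hP.ne' (add_left_cancel h)⟩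

theorem induction_on_horner {motive : AdjoinRoot P → Prop} (B : AdjoinRoot P) (zero : motive 0)
    (intCast_add_root_mul : ∀ (c : ℤ) (B : AdjoinRoot P), motive B → motive (c + root P * B)) :
    motive B := by
  have hsum (m : ℕ) :
      ∀ b : ℕ → ℤ, motive (∑ i ∈ Finset.range m, (b i : AdjoinRoot P) * root P ^ i) := by
    induction m with
    | zero => simpa using zero
    | succ m ih =>
      intro b
      rw [sum_range_succ_mul_pow]
      exact intCast_add_root_mul _ _ (ih _)
  induction B using AdjoinRoot.induction_on with | ih f =>
  rw [f.as_sum_range_C_mul_X_pow, map_sum]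
  simp only [map_mul, map_pow, mk_C, mk_X]
  exact hsum _ _

end AdjoinRoot

section SrsDynamics

open AdjoinRoot

variable {P : ℤ[X]} {n : ℕ}

theorem intCast_add_mk_srsPoly (hdeg : P.natDegree ≤ n + 1) (c : ℤ) (z : Fin (n + 1) → ℤ) :
    (c : AdjoinRoot P) + mk P (srsPoly P z)
      = (((c + (srsPoly P z).coeff 0) % P.coeff 0 : ℤ) : AdjoinRoot P)
        + root P * mk P (srsPoly P (Fin.snoc (Fin.tail z)
            (-((c + (srsPoly P z).coeff 0) / P.coeff 0)) : Fin (n + 1) → ℤ)) := by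
  rw [← mk_X, ← map_mul, X_mul_srsPoly_snoc_tail hdeg]
  simp only [map_add, map_sub, map_mul, mk_self, eq_intCast, map_intCast]
  have hdiv := congrArg (Int.cast : ℤ → AdjoinRoot P)
    (Int.emod_add_mul_ediv (c + (srsPoly P z).coeff 0) (P.coeff 0))
  push_cast at hdiv ⊢
  linear_combination -hdiv

theorem mk_srsPoly_eq_digit_add_root_mul (hdeg : P.natDegree ≤ n + 1) (z : Fin (n + 1) → ℤ) :
    mk P (srsPoly P z)
      = (((srsPoly P z).coeff 0 % P.coeff 0 : ℤ) : AdjoinRoot P)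
        + root P * mk P (srsPoly P (srsStep P z)) := by
  have h := intCast_add_mk_srsPoly hdeg 0 z
  rwa [Int.cast_zero, zero_add, zero_add] at h

theorem eq_zero_of_mk_srsPoly_eq_zero (hdeg : P.natDegree ≤ n + 1) (hlead : P.coeff (n + 1) ≠ 0)
    {z : Fin (n + 1) → ℤ} (h : mk P (srsPoly P z) = 0) : z = 0 := by
  refine eq_zero_of_srsPoly_eq_zero hdeg hlead (eq_zero_of_dvd_of_natDegree_lt (mk_eq_zero.mp h) ?_)
  rw [natDegree_eq_of_le_of_coeff_ne_zero hdeg hlead]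
  exact natDegree_srsPoly_lt hdeg n.succ_pos z

theorem exists_iterate_srsStep_eq_zero (hdeg : P.natDegree ≤ n + 1) (hlead : P.coeff (n + 1) ≠ 0)
    (hP0 : 0 < P.coeff 0) {z : Fin (n + 1) → ℤ}
    (h : HasDigitExpansion (root P) (P.coeff 0) (mk P (srsPoly P z))) :
    ∃ k, (srsStep P)^[k] z = 0 := by
  obtain ⟨ℓ, b, hb, hz⟩ := h
  refine ⟨ℓ + 1, ?_⟩
  have hdigit (z : Fin (n + 1) → ℤ) : 0 ≤ (srsPoly P z).coeff 0 % P.coeff 0 ∧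
      (srsPoly P z).coeff 0 % P.coeff 0 < P.coeff 0 :=
    ⟨Int.emod_nonneg _ hP0.ne', Int.emod_lt_of_pos _ hP0⟩
  induction ℓ generalizing z b with
  | zero =>
    rw [mk_srsPoly_eq_digit_add_root_mul hdeg, Finset.sum_range_one, pow_zero, mul_one,
      ← add_zero (b 0 : AdjoinRoot P), ← mul_zero (root P)] at hz
    exact eq_zero_of_mk_srsPoly_eq_zero hdeg hlead
      (intCast_add_root_mul_inj hP0 (hdigit _) (hb 0 le_rfl) hz).2
  | succ ℓ ih =>
    rw [mk_srsPoly_eq_digit_add_root_mul hdeg, sum_range_succ_mul_pow] at hz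
    exact ih _ (fun i hi => hb (i + 1) (by omega))
      (intCast_add_root_mul_inj hP0 (hdigit _) (hb 0 (by omega)) hz).2

theorem hasDigitExpansion_mk_srsPoly_of_iterate_eq_zero (hdeg : P.natDegree ≤ n + 1)
    (hP0 : 0 < P.coeff 0) {k : ℕ} {z : Fin (n + 1) → ℤ} (h : (srsStep P)^[k] z = 0) :
    HasDigitExpansion (root P) (P.coeff 0) (mk P (srsPoly P z)) := by
  induction k generalizing z with
  | zero =>
    subst h
    simpa using HasDigitExpansion.zero hP0
  | succ k ih =>
    rw [mk_srsPoly_eq_digit_add_root_mul hdeg]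
    exact (ih h).intCast_add_mul ⟨Int.emod_nonneg _ hP0.ne', Int.emod_lt_of_pos _ hP0⟩

theorem hasDigitExpansion_of_forall_mk_srsPoly (hdeg : P.natDegree ≤ n + 1) (hP0 : 0 < P.coeff 0)
    (h : ∀ z : Fin (n + 1) → ℤ, HasDigitExpansion (root P) (P.coeff 0) (mk P (srsPoly P z)))
    (B : AdjoinRoot P) : HasDigitExpansion (root P) (P.coeff 0) B := by
  suffices ∀ z : Fin (n + 1) → ℤ,
      HasDigitExpansion (root P) (P.coeff 0) (B + mk P (srsPoly P z)) by
    simpa using this 0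
  induction B using induction_on_horner with
  | zero => simpa using h
  | intCast_add_root_mul c B ih =>
    intro z
    set z' : Fin (n + 1) → ℤ :=
      Fin.snoc (Fin.tail z) (-((c + (srsPoly P z).coeff 0) / P.coeff 0))
    rw [show (c : AdjoinRoot P) + root P * B + mk P (srsPoly P z)
        = ((c + (srsPoly P z).coeff 0) % P.coeff 0 : ℤ) + root P * (B + mk P (srsPoly P z')) by
      linear_combination intCast_add_mk_srsPoly hdeg c z]
    exact (ih z').intCast_add_mul ⟨Int.emod_nonneg _ hP0.ne', Int.emod_lt_of_pos _ hP0⟩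

theorem forall_hasDigitExpansion_iff (hdeg : P.natDegree ≤ n + 1) (hlead : P.coeff (n + 1) ≠ 0)
    (hP0 : 0 < P.coeff 0) :
    (∀ B : AdjoinRoot P, HasDigitExpansion (root P) (P.coeff 0) B)
      ↔ ∀ z : Fin (n + 1) → ℤ, ∃ k, (srsStep P)^[k] z = 0 :=
  ⟨fun h _ => exists_iterate_srsStep_eq_zero hdeg hlead hP0 (h _),
    fun h => hasDigitExpansion_of_forall_mk_srsPoly hdeg hP0 fun z =>
      hasDigitExpansion_mk_srsPoly_of_iterate_eq_zero hdeg hP0 (h z).choose_spec⟩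

end SrsDynamics

theorem coeff_cnsPoly (d : ℕ) (p : Fin (d + 1) → ℤ) (k : Fin (d + 1)) :
    (cnsPoly d p).coeff k = p k := by
  simp only [cnsPoly, finsetSum_coeff, coeff_C_mul_X_pow, Fin.val_inj, Finset.sum_ite_eq,
    Finset.mem_univ, if_true]

theorem coeff_zero_cnsPoly (d : ℕ) (p : Fin (d + 1) → ℤ) : (cnsPoly d p).coeff 0 = p 0 := by
  simpa using coeff_cnsPoly d p 0

theorem natDegree_cnsPoly_le (d : ℕ) (p : Fin (d + 1) → ℤ) : (cnsPoly d p).natDegree ≤ d :=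
  natDegree_sum_le_of_forall_le _ _ fun j _ => (natDegree_C_mul_X_pow_le _ _).trans j.is_le

theorem srsMap_eq_srsStep {n : ℕ} (p : Fin (n + 2) → ℤ) (hp0 : 0 < p 0) (r : Fin (n + 1) → ℝ)
    (hr : ∀ j : Fin (n + 1), r j = (p ⟨n + 1 - j, by omega⟩ : ℝ) / (p 0 : ℝ)) :
    srsMap (n + 1) r = srsStep (cnsPoly (n + 1) p) := by
  funext z i
  induction i using Fin.lastCases with
  | cast i =>
    rw [srsMap, dif_pos (by simp), srsStep, Fin.snoc_castSucc]
    rfl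
  | last =>
    have hsum :
        ∑ j, r j * (z j : ℝ) = ((srsPoly (cnsPoly (n + 1) p) z).coeff 0 : ℝ) / (p 0 : ℝ) := by
      rw [coeff_srsPoly, Int.cast_sum, Finset.sum_div]
      refine Finset.sum_congr rfl fun j _ => ?_
      rw [hr, zero_add, ← coeff_cnsPoly (n + 1) p ⟨n + 1 - j, by omega⟩]
      push_cast
      ring
    rw [srsMap, dif_neg (by simp), srsStep, Fin.snoc_last, hsum, coeff_zero_cnsPoly,
      Int.floor_div_cast_of_nonneg hp0.le, Int.floor_intCast]

/-- `P` is a CNS polynomial with digit set `{0,…,p_0-1}` if and only if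
`r = (p_d/p_0, …, p_1/p_0) ∈ D_d^{(0)}`. -/
theorem cns_iff_srs_finiteness (d : ℕ) (hd : 1 ≤ d) (p : Fin (d + 1) → ℤ)
    (hp0 : 2 ≤ p 0) (hpd : p (Fin.last d) ≠ 0)
    (r : Fin d → ℝ)
    (hr : ∀ j : Fin d, r j = (p ⟨d - (j : ℕ), by omega⟩ : ℝ) / (p 0 : ℝ)) :
    (∀ B : CnsRing d p, ∃ (ℓ : ℕ) (b : ℕ → ℤ),
        (∀ i ≤ ℓ, 0 ≤ b i ∧ b i < p 0) ∧
        B = ∑ i ∈ Finset.range (ℓ + 1), ((b i : ℤ) : CnsRing d p) * cnsX d p ^ i)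
      ↔ (∀ z : Fin d → ℤ, ∃ k : ℕ, (srsMap d r)^[k] z = 0) := by
  obtain ⟨n, rfl⟩ : ∃ n, d = n + 1 := ⟨d - 1, by omega⟩
  have hlead : (cnsPoly (n + 1) p).coeff (n + 1) ≠ 0 := by
    simpa using (coeff_cnsPoly (n + 1) p (Fin.last _)).trans_ne hpd
  rw [srsMap_eq_srsStep p (by omega) r hr, ← forall_hasDigitExpansion_iff
    (natDegree_cnsPoly_le _ p) hlead (by rw [coeff_zero_cnsPoly]; omega), coeff_zero_cnsPoly]
  rfl
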